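/- Let F, F_L, F̂ be symmetric d×d real matrices with F positive definite, and let η_e, η_a ≥ 0 satisfy ‖F̂ − F_L‖₂ ≤ ‖F_L‖₂·η_e and ‖F_L − F‖₂ ≤ ‖F‖₂·η_a. If (‖F_L‖₂/‖F‖₂)·η_e + η_a < 1/κ(F), then F̂ is positive definite (so F̂⁻¹ exists), and ‖F̂⁻¹ − F⁻¹‖₂ / ‖F⁻¹‖₂ ≤ κ(F̂)·( (‖F_L‖₂/‖F̂‖₂)·η_e + (‖F‖₂/‖F̂‖₂)·η_a ). -/

import Mathlib

/-- Spectral norm (largest singular value) of a real square matrix. -/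
noncomputable def specNorm {d : ℕ} (A : Matrix (Fin d) (Fin d) ℝ) : ℝ :=
  ‖LinearMap.toContinuousLinearMap (Matrix.toEuclideanLin A)‖

/-- Condition number `‖A‖₂ · ‖A⁻¹‖₂` of a matrix. -/
noncomputable def condNumber {d : ℕ} (A : Matrix (Fin d) (Fin d) ℝ) : ℝ :=
  specNorm A * specNorm A⁻¹

open scoped Matrix.Norms.L2Operator Matrix

lemma specNorm_eq {d : ℕ} (A : Matrix (Fin d) (Fin d) ℝ) : specNorm A = ‖A‖ := rfl

lemma dot_eq_inner {d : ℕ} (x y : Fin d → ℝ) :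
    x ⬝ᵥ y = (inner ℝ ((WithLp.equiv 2 (Fin d → ℝ)).symm x)
      ((WithLp.equiv 2 (Fin d → ℝ)).symm y) : ℝ) := by
  change x ⬝ᵥ y = y ⬝ᵥ star x; rw [star_trivial, dotProduct_comm]

lemma dot_le_norms {d : ℕ} (x y : Fin d → ℝ) :
    x ⬝ᵥ y ≤ ‖(WithLp.equiv 2 (Fin d → ℝ)).symm x‖ * ‖(WithLp.equiv 2 (Fin d → ℝ)).symm y‖ := by
  rw [dot_eq_inner]; exact real_inner_le_norm _ _

lemma dot_self_eq_norm_sq {d : ℕ} (x : Fin d → ℝ) :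
    x ⬝ᵥ x = ‖(WithLp.equiv 2 (Fin d → ℝ)).symm x‖ ^ 2 := by
  rw [dot_eq_inner]; exact real_inner_self_eq_norm_sq _

lemma norm_mulVec_le {d : ℕ} (A : Matrix (Fin d) (Fin d) ℝ) (x : Fin d → ℝ) :
    ‖(WithLp.equiv 2 (Fin d → ℝ)).symm (A *ᵥ x)‖ ≤ ‖A‖ * ‖(WithLp.equiv 2 (Fin d → ℝ)).symm x‖ :=
  Matrix.l2_opNorm_mulVec A ((WithLp.equiv 2 (Fin d → ℝ)).symm x)

/-- symmetry of the bilinear form of a symmetric matrix -/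
lemma bilin_symm {d : ℕ} {M : Matrix (Fin d) (Fin d) ℝ} (hM : M.IsSymm)
    (a b : Fin d → ℝ) : a ⬝ᵥ (M *ᵥ b) = b ⬝ᵥ (M *ᵥ a) := by
  rw [Matrix.dotProduct_mulVec, ← Matrix.mulVec_transpose, hM.eq, dotProduct_comm]

/-- Cauchy–Schwarz for the bilinear form of a positive semidefinite matrix. -/
lemma posSemidef_cs {d : ℕ} {M : Matrix (Fin d) (Fin d) ℝ} (hM : M.PosSemidef)
    (u v : Fin d → ℝ) :
    (u ⬝ᵥ (M *ᵥ v)) ^ 2 ≤ (u ⬝ᵥ (M *ᵥ u)) * (v ⬝ᵥ (M *ᵥ v)) := by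
  have hsymm : M.IsSymm := by
    have := hM.1
    rwa [Matrix.IsHermitian, Matrix.conjTranspose_eq_transpose_of_trivial] at this
  set cuu := u ⬝ᵥ (M *ᵥ u)
  set cuv := u ⬝ᵥ (M *ᵥ v)
  set cvv := v ⬝ᵥ (M *ᵥ v)
  have quad : ∀ t : ℝ, 0 ≤ cvv * (t * t) + (2 * cuv) * t + cuu := by
    intro t
    have h := (Matrix.posSemidef_iff_dotProduct_mulVec.mp hM).2 (u + t • v)
    rw [star_trivial] at h
    have hexp : (u + t • v) ⬝ᵥ (M *ᵥ (u + t • v))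
        = cvv * (t * t) + (2 * cuv) * t + cuu := by
      have hvu : v ⬝ᵥ (M *ᵥ u) = cuv := bilin_symm hsymm v u
      simp only [Matrix.mulVec_add, Matrix.mulVec_smul, dotProduct_add,
        add_dotProduct, smul_dotProduct, dotProduct_smul,
        smul_eq_mul]
      rw [hvu]; ring
    rw [hexp] at h
    exact h
  have hd := discrim_le_zero quad
  rw [discrim] at hd
  nlinarith [hd]

/-- quadratic form lower bound for a positive definite matrix -/
lemma posdef_lower {d : ℕ} {M : Matrix (Fin d) (Fin d) ℝ} (hM : M.PosDef) (x : Fin d → ℝ) :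
    x ⬝ᵥ x ≤ ‖M⁻¹‖ * (x ⬝ᵥ (M *ᵥ x)) := by
  by_cases hx : x = 0
  · subst hx
    simp only [zero_dotProduct, Matrix.mulVec_zero, dotProduct_zero, mul_zero]
    exact le_refl 0
  · set y := M⁻¹ *ᵥ x with hy
    have hdet : IsUnit M.det := (Matrix.isUnit_iff_isUnit_det M).mp hM.isUnit
    have hMy : M *ᵥ y = x := by
      rw [hy, Matrix.mulVec_mulVec, Matrix.mul_nonsing_inv _ hdet, Matrix.one_mulVec]
    have hs : 0 < x ⬝ᵥ x := by
      have := Matrix.dotProduct_star_self_pos_iff (v := x) |>.mpr hx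
      rwa [star_trivial] at this
    have hcs := posSemidef_cs hM.posSemidef x y
    rw [hMy] at hcs
    have hyx : y ⬝ᵥ x ≤ ‖M⁻¹‖ * (x ⬝ᵥ x) := by
      calc y ⬝ᵥ x ≤ ‖(WithLp.equiv 2 (Fin d → ℝ)).symm y‖
            * ‖(WithLp.equiv 2 (Fin d → ℝ)).symm x‖ := dot_le_norms y x
        _ ≤ (‖M⁻¹‖ * ‖(WithLp.equiv 2 (Fin d → ℝ)).symm x‖)
            * ‖(WithLp.equiv 2 (Fin d → ℝ)).symm x‖ := by
            apply mul_le_mul_of_nonneg_right (norm_mulVec_le M⁻¹ x) (norm_nonneg _)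
        _ = ‖M⁻¹‖ * (x ⬝ᵥ x) := by rw [dot_self_eq_norm_sq]; ring
    have hq : 0 ≤ x ⬝ᵥ (M *ᵥ x) := by
      have := (Matrix.posSemidef_iff_dotProduct_mulVec.mp hM.posSemidef).2 x
      rwa [star_trivial] at this
    nlinarith [hcs, hyx, hs, hq]

/-- |xᵀAx| ≤ ‖A‖ (xᵀx) -/
lemma abs_quad_le {d : ℕ} (A : Matrix (Fin d) (Fin d) ℝ) (x : Fin d → ℝ) :
    |x ⬝ᵥ (A *ᵥ x)| ≤ ‖A‖ * (x ⬝ᵥ x) := by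
  rw [dot_eq_inner]
  calc |(inner ℝ ((WithLp.equiv 2 (Fin d → ℝ)).symm x)
        ((WithLp.equiv 2 (Fin d → ℝ)).symm (A *ᵥ x)) : ℝ)|
      ≤ ‖(WithLp.equiv 2 (Fin d → ℝ)).symm x‖
        * ‖(WithLp.equiv 2 (Fin d → ℝ)).symm (A *ᵥ x)‖ := abs_real_inner_le_norm _ _
    _ ≤ ‖(WithLp.equiv 2 (Fin d → ℝ)).symm x‖
        * (‖A‖ * ‖(WithLp.equiv 2 (Fin d → ℝ)).symm x‖) :=
        mul_le_mul_of_nonneg_left (norm_mulVec_le A x) (norm_nonneg _)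
    _ = ‖A‖ * (x ⬝ᵥ x) := by rw [dot_self_eq_norm_sq]; ring


/-- combining the empirical-mean error `η_e` and the approximation
error `η_a` into a relative-error bound on the learned BCRB, together with a
sufficient condition for its existence. -/
theorem lbcrb_relative_error_bound
    {d : ℕ} (F FL Fhat : Matrix (Fin d) (Fin d) ℝ)
    (hFsymm : F.IsSymm) (hFLsymm : FL.IsSymm) (hFhatsymm : Fhat.IsSymm)
    (hFpos : F.PosDef)
    (ηe ηa : ℝ) (hηe : 0 ≤ ηe) (hηa : 0 ≤ ηa)
    (he : specNorm (Fhat - FL) ≤ specNorm FL * ηe)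
    (ha : specNorm (FL - F) ≤ specNorm F * ηa)
    (hcond : (specNorm FL / specNorm F) * ηe + ηa < 1 / condNumber F) :
    Fhat.PosDef ∧
      specNorm (Fhat⁻¹ - F⁻¹) / specNorm F⁻¹
        ≤ condNumber Fhat * ((specNorm FL / specNorm Fhat) * ηe
            + (specNorm F / specNorm Fhat) * ηa) := by
  simp only [condNumber, specNorm_eq] at he ha hcond ⊢
  -- positivity of the norms of F and F⁻¹
  have hc0 : 0 < 1 / (‖F‖ * ‖F⁻¹‖) := by
    refine lt_of_le_of_lt ?_ hcond
    have h1 : 0 ≤ ‖FL‖ / ‖F‖ * ηe := by positivity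
    linarith
  have hprod : 0 < ‖F‖ * ‖F⁻¹‖ := one_div_pos.mp hc0
  have hFn : 0 < ‖F‖ := by
    rcases mul_pos_iff.mp hprod with ⟨h1, _⟩ | ⟨h1, _⟩
    · exact h1
    · exact absurd h1 (not_lt.mpr (norm_nonneg _))
  have hFi : 0 < ‖F⁻¹‖ := by
    rcases mul_pos_iff.mp hprod with ⟨_, h2⟩ | ⟨_, h2⟩
    · exact h2
    · exact absurd h2 (not_lt.mpr (norm_nonneg _))
  -- the total perturbation bound
  set S : ℝ := ‖FL‖ * ηe + ‖F‖ * ηa with hSdef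
  have hES : ‖Fhat - F‖ ≤ S := by
    calc ‖Fhat - F‖ = ‖(Fhat - FL) + (FL - F)‖ := by rw [sub_add_sub_cancel]
      _ ≤ ‖Fhat - FL‖ + ‖FL - F‖ := norm_add_le _ _
      _ ≤ S := add_le_add he ha
  have hS1 : S * ‖F⁻¹‖ < 1 := by
    have h2 : (‖FL‖ / ‖F‖ * ηe + ηa) * (‖F‖ * ‖F⁻¹‖) < 1 :=
      (lt_div_iff₀ hprod).mp hcond
    have h3 : (‖FL‖ / ‖F‖ * ηe + ηa) * (‖F‖ * ‖F⁻¹‖) = S * ‖F⁻¹‖ := by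
      field_simp
      ring
    rwa [h3] at h2
  have hES1 : ‖Fhat - F‖ * ‖F⁻¹‖ < 1 :=
    lt_of_le_of_lt (mul_le_mul_of_nonneg_right hES (le_of_lt hFi)) hS1
  -- Fhat is positive definite
  have hFhatpos : Fhat.PosDef := by
    apply Matrix.PosDef.of_dotProduct_mulVec_pos
    · rw [Matrix.IsHermitian, Matrix.conjTranspose_eq_transpose_of_trivial]
      exact hFhatsymm
    · intro x hx
      rw [star_trivial]
      have hsplit : x ⬝ᵥ (Fhat *ᵥ x) = x ⬝ᵥ (F *ᵥ x) + x ⬝ᵥ ((Fhat - F) *ᵥ x) := by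
        rw [Matrix.sub_mulVec, dotProduct_sub]
        ring
      have hs : 0 < x ⬝ᵥ x := by
        have := Matrix.dotProduct_star_self_pos_iff (v := x) |>.mpr hx
        rwa [star_trivial] at this
      have hlow := posdef_lower hFpos x
      have habs := abs_quad_le (Fhat - F) x
      have h1 : -(‖Fhat - F‖ * (x ⬝ᵥ x)) ≤ x ⬝ᵥ ((Fhat - F) *ᵥ x) := neg_le_of_abs_le habs
      rw [hsplit]
      nlinarith [mul_lt_mul_of_pos_left hES1 hs, hlow, h1, hs, hFi]
  refine ⟨hFhatpos, ?_⟩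
  -- Fhat is nonzero, hence its norm is positive
  have hFhatn : 0 < ‖Fhat‖ := by
    rcases Nat.eq_zero_or_pos d with hd | hd
    · exfalso
      subst hd
      have : F = 0 := by ext i j; exact i.elim0
      rw [this, norm_zero] at hFn
      exact lt_irrefl 0 hFn
    · rw [norm_pos_iff]
      intro h0
      have i : Fin d := ⟨0, hd⟩
      have hx : (Pi.single i 1 : Fin d → ℝ) ≠ 0 := by
        intro h
        have := congrFun h i
        simp at this
      have := hFhatpos.dotProduct_mulVec_pos hx
      rw [h0] at this
      simp at this
  -- the key identity
  have hdetF : IsUnit F.det := (Matrix.isUnit_iff_isUnit_det F).mp hFpos.isUnit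
  have hdetFhat : IsUnit Fhat.det := (Matrix.isUnit_iff_isUnit_det Fhat).mp hFhatpos.isUnit
  have key : Fhat⁻¹ - F⁻¹ = Fhat⁻¹ * (F - Fhat) * F⁻¹ := by
    rw [mul_sub, Matrix.nonsing_inv_mul Fhat hdetFhat, sub_mul, one_mul, mul_assoc,
      Matrix.mul_nonsing_inv F hdetF, mul_one]
  have hchain : ‖Fhat⁻¹ - F⁻¹‖ ≤ ‖Fhat⁻¹‖ * S * ‖F⁻¹‖ := by
    rw [key]
    calc ‖Fhat⁻¹ * (F - Fhat) * F⁻¹‖ ≤ ‖Fhat⁻¹ * (F - Fhat)‖ * ‖F⁻¹‖ := norm_mul_le _ _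
      _ ≤ (‖Fhat⁻¹‖ * ‖F - Fhat‖) * ‖F⁻¹‖ :=
          mul_le_mul_of_nonneg_right (norm_mul_le _ _) (norm_nonneg _)
      _ ≤ ‖Fhat⁻¹‖ * S * ‖F⁻¹‖ := by
          have : ‖F - Fhat‖ ≤ S := by rw [norm_sub_rev]; exact hES
          exact mul_le_mul_of_nonneg_right
            (mul_le_mul_of_nonneg_left this (norm_nonneg _)) (norm_nonneg _)
  rw [div_le_iff₀ hFi]
  refine le_trans hchain (le_of_eq ?_)
  field_simp
  ring
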